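/- Let s be a prime power. Let A be an n1×m1 matrix over GF(s) that is an OA(n1, m1, s, 1) if m1 = 1 and an OA(n1, m1, s, 2) if m1 > 1, and for i = 1,…,n1 let B_i be an α-resolvable orthogonal array ROA(n2, m2, s, 2; α) (with its resolution into consecutive blocks of αs rows). Let F = [D_1, …, D_s] be the array E of the construction with its last m1 columns removed (i.e., with D_{s+1} removed). Then F is an α-resolvable orthogonal array ROA(n1·n2, (s−1)·m1·m2 + m2, s, 2; α): F is an OA(n1·n2, (s−1)·m1·m2 + m2, s, 2) and, partitioning its rows into n1·n2/(αs) consecutive blocks of αs rows, every column of every block is balanced. -/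

import Mathlib

open Finset

/-- `M` (rows indexed by `R`, columns by `C`, entries in the finite field `F` with
`s = Fintype.card F` elements) is an orthogonal array of strength `t`: for any choice of `t`
distinct columns and any `t`-tuple of symbols, the number of rows showing that tuple, times
`s ^ t`, equals the number of rows (i.e. each tuple appears exactly `(card R) / s ^ t` times). -/
def IsOA {R C F : Type*} [Fintype R] [Fintype F] [DecidableEq F]
    (M : R → C → F) (t : ℕ) : Prop :=
  ∀ cols : Fin t → C, Function.Injective cols → ∀ v : Fin t → F,
    (Finset.univ.filter fun r : R => ∀ j, M r (cols j) = v j).card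
      * Fintype.card F ^ t = Fintype.card R

/-- A vector over `F` is balanced if every symbol of `F` occurs equally often among its
entries. -/
def IsBalanced {R F : Type*} [Fintype R] [Fintype F] [DecidableEq F] (v : R → F) : Prop :=
  ∀ x : F, (Finset.univ.filter fun r : R => v r = x).card * Fintype.card F = Fintype.card R

/-- `M` is a difference scheme: for any two distinct columns, the vector of entrywise
differences contains every element of `F` equally often. -/
def IsDiffScheme {R C F : Type*} [Fintype R] [Field F] [Fintype F] [DecidableEq F]
    (M : R → C → F) : Prop :=
  ∀ j j' : C, j ≠ j' → ∀ x : F,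
    (Finset.univ.filter fun r : R => M r j - M r j' = x).card * Fintype.card F
      = Fintype.card R
/-- `M` is an `α`-resolvable orthogonal array `ROA(n, m, s, 2; a)`: it is an
`OA(n, m, s, 2)`, `a·s` divides `n`, and in each of the `n/(a·s)` consecutive blocks of
`a·s` rows (row `r` lies in block `⌊r/(a·s)⌋`) every column contains every symbol exactly
`a` times (i.e. each block is an `OA(a·s, m, s, 1)`). -/
def IsROA {F : Type} [Fintype F] [DecidableEq F] {n m : ℕ}
    (M : Fin n → Fin m → F) (a : ℕ) : Prop :=
  IsOA M 2 ∧ (a * Fintype.card F ∣ n) ∧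
    ∀ (k : ℕ) (l : Fin m) (x : F), (k + 1) * (a * Fintype.card F) ≤ n →
      (Finset.univ.filter fun r : Fin n =>
        (r : ℕ) / (a * Fintype.card F) = k ∧ M r l = x).card = a

/-- The array `𝐅 = [D₁, …, D_s]` of the construction (the array `E` with the `m₁` columns of
`D_{s+1}` removed).  Rows are indexed by `I × Fin n₂`; columns `Sum.inl (g, k, l)` with `g`
running over nonzero elements of `F` are the columns of `D₁, …, D_{s−1}`, with entries
`A i k + g·(Bᵢ) j l`, and columns `Sum.inr l` are those of `D_s = B`. -/
def FmatG {I F : Type} [Field F] {m1 n2 m2 : ℕ}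
    (A : I → Fin m1 → F) (B : I → Fin n2 → Fin m2 → F) :
    (I × Fin n2) → (({g : F // g ≠ 0} × Fin m1 × Fin m2) ⊕ Fin m2) → F
  | p, Sum.inl (g, k, l) => A p.1 k + g.1 * B p.1 p.2 l
  | p, Sum.inr l => B p.1 p.2 l

/-
Within the rows of block `i`, every column of `𝐅` is an affine bijection `y ↦ A i k + g y`
(or the identity) applied to a column `l` of `Bᵢ`. Block balance is therefore inherited from
`Bᵢ`. For strength two, take two columns of `𝐅`. If they come from different columns of `Bᵢ`,
each block contributes `n₂/s²` rows with any prescribed pair of symbols, because `Bᵢ` has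
strength two. If they come from the same column `l`, a row of block `i` shows the pair only
when the two inverse affine maps send the pair to the same symbol; this is a linear equation
`p A i k - q A i k' = c` with `p ≠ 0` (and `p ≠ q` when `k = k'`), which holds in exactly
`n₁/s` rows of `A` because the columns of `A` are balanced and `A` has strength two. Each such
block then contributes the `n₂/s` rows of `Bᵢ` carrying that symbol in column `l`.
-/

section OrthogonalArray

variable {R C F : Type*} [Fintype R] [Fintype F] [DecidableEq F] {M : R → C → F}

theorem isOA_two_iff :
    IsOA M 2 ↔ ∀ c c', c ≠ c' → ∀ x y,
      #{r | M r c = x ∧ M r c' = y} * Fintype.card F ^ 2 = Fintype.card R := by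
  constructor
  · intro h c c' hcc x y
    simpa [Fin.forall_fin_two] using h ![c, c'] (injective_pair_iff_ne.mpr hcc) ![x, y]
  · intro h cols hinj v
    simpa [Fin.forall_fin_two] using
      h (cols 0) (cols 1) (hinj.ne (by decide)) (v 0) (v 1)

theorem isOA_two_of_subsingleton [Subsingleton C] (M : R → C → F) : IsOA M 2 :=
  fun cols hinj => absurd (hinj (Subsingleton.elim (cols 0) (cols 1))) (by decide)

theorem IsOA.isBalanced_of_one (h : IsOA M 1) (c : C) : IsBalanced fun r => M r c := by
  intro x
  simpa using h ![c] (Function.injective_of_subsingleton _) ![x]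

theorem IsOA.card_filter_eq_comp [Nonempty F] (h : IsOA M 2) {c c' : C} (hcc : c ≠ c')
    (f : F → F) :
    #{r | M r c' = f (M r c)} * Fintype.card F = Fintype.card R := by
  have hfiber : ∀ x ∈ (univ : Finset F),
      #{r ∈ {r | M r c' = f (M r c)} | M r c = x} * Fintype.card F ^ 2 = Fintype.card R := by
    intro x _
    rw [filter_filter, ← isOA_two_iff.mp h c c' hcc x (f x)]
    congr 2
    exact filter_congr fun r _ =>
      ⟨fun ⟨h₁, h₂⟩ => ⟨h₂, h₂ ▸ h₁⟩, fun ⟨h₁, h₂⟩ => ⟨h₁ ▸ h₂, h₁⟩⟩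
  refine Nat.eq_of_mul_eq_mul_right (Fintype.card_pos (α := F)) ?_
  rw [mul_assoc, ← sq, card_eq_sum_card_fiberwise (f := fun r => M r c) (t := univ)
    (fun _ _ => mem_coe.mpr (mem_univ _)), sum_mul, sum_congr rfl hfiber, sum_const,
    card_univ, smul_eq_mul, mul_comm]

theorem IsOA.isBalanced_of_two [Nonempty F] (h : IsOA M 2) {c c' : C} (hcc : c ≠ c') :
    IsBalanced fun r => M r c' :=
  fun x => h.card_filter_eq_comp hcc fun _ => x

end OrthogonalArray

section Balanced

variable {R F : Type*} [Fintype R] [Field F] [Fintype F] [DecidableEq F] {v : R → F}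

theorem IsBalanced.card_filter_mul_eq (h : IsBalanced v) {p : F} (hp : p ≠ 0) (c : F) :
    #{r | p * v r = c} * Fintype.card F = Fintype.card R := by
  simpa only [← eq_inv_mul_iff_mul_eq₀ hp] using h (p⁻¹ * c)

end Balanced

theorem IsROA.isBalanced {F : Type} [Fintype F] [DecidableEq F] {n m a : ℕ}
    {M : Fin n → Fin m → F} (h : IsROA M a) (l : Fin m) : IsBalanced fun r => M r l := by
  obtain ⟨-, hdvd, hblock⟩ := h
  set d := a * Fintype.card F
  intro x
  have hfiber : ∀ w ∈ range (n / d),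
      #(({r | M r l = x} : Finset (Fin n)).filter fun r : Fin n => (r : ℕ) / d = w) = a := by
    intro w hw
    rw [filter_filter, ← hblock w l x]
    · simp only [and_comm]
    · calc (w + 1) * d ≤ n / d * d := Nat.mul_le_mul_right d (mem_range.mp hw)
        _ ≤ n := Nat.div_mul_le_self n d
  rw [card_eq_sum_card_fiberwise (f := fun r : Fin n => (r : ℕ) / d) (t := range (n / d))
      (fun r _ => mem_range.mpr (Nat.div_lt_div_of_lt_of_dvd hdvd r.isLt)),
    sum_congr rfl hfiber, sum_const, card_range, smul_eq_mul, mul_assoc,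
    Nat.div_mul_cancel hdvd, Fintype.card_fin]

theorem card_filter_mul_sub_mul_eq {I C F : Type*} [Fintype I] [Field F] [Fintype F]
    [DecidableEq F] {A : I → C → F} (hbal : ∀ k, IsBalanced fun i => A i k) (hA : IsOA A 2)
    {k k' : C} {p q : F} (hp : p ≠ 0) (hpq : k = k' → p ≠ q) (c : F) :
    #{i | p * A i k - q * A i k' = c} * Fintype.card F = Fintype.card I := by
  by_cases hkk : k = k'
  · subst hkk
    simpa only [← sub_mul] using (hbal k).card_filter_mul_eq (sub_ne_zero.mpr (hpq rfl)) c
  · convert hA.card_filter_eq_comp (Ne.symm hkk) (fun y => p⁻¹ * (q * y + c)) using 3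
    refine filter_congr fun i _ => ?_
    rw [eq_inv_mul_iff_mul_eq₀ hp, sub_eq_iff_eq_add']

section Stack

variable {I R C F : Type*} [Fintype I] [Fintype R] [Fintype F] [DecidableEq F]
  {B : I → R → C → F}

theorem card_filter_prod_eq_sum (P : I × R → Prop) [DecidablePred P] :
    #{p | P p} = ∑ i, #{j | P (i, j)} := by
  simp only [card_filter, Fintype.sum_prod_type]

theorem card_filter_stack_of_ne (hB : ∀ i, IsOA (B i) 2) {l l' : C} (hll : l ≠ l')
    (u w : I → F) :
    #{p : I × R | B p.1 p.2 l = u p.1 ∧ B p.1 p.2 l' = w p.1} * Fintype.card F ^ 2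
      = Fintype.card I * Fintype.card R := by
  rw [card_filter_prod_eq_sum, sum_mul,
    sum_congr rfl fun i _ => isOA_two_iff.mp (hB i) l l' hll (u i) (w i),
    sum_const, card_univ, smul_eq_mul]

theorem card_filter_stack_of_eq {l : C} (hB : ∀ i, IsBalanced fun j => B i j l) (u w : I → F) :
    #{p : I × R | B p.1 p.2 l = u p.1 ∧ B p.1 p.2 l = w p.1} * Fintype.card F
      = #{i | u i = w i} * Fintype.card R := by
  have hrow : ∀ i, #{j | B i j l = u i ∧ B i j l = w i} * Fintype.card F
      = if u i = w i then Fintype.card R else 0 := by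
    intro i
    split_ifs with huw
    · simpa only [huw, and_self] using hB i (w i)
    · rw [filter_false_of_mem fun j _ ⟨h₁, h₂⟩ => huw (h₁ ▸ h₂), card_empty, zero_mul]
  rw [card_filter_prod_eq_sum, sum_mul, sum_congr rfl fun i _ => hrow i, sum_ite,
    sum_const_zero, add_zero, sum_const, smul_eq_mul]

end Stack

namespace FmatG

variable {I F : Type} [Field F] {m1 n2 m2 : ℕ} {A : I → Fin m1 → F}
  {B : I → Fin n2 → Fin m2 → F}

def baseCol : ({g : F // g ≠ 0} × Fin m1 × Fin m2) ⊕ Fin m2 → Fin m2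
  | Sum.inl (_, _, l) => l
  | Sum.inr l => l

def baseEntry (A : I → Fin m1 → F) :
    ({g : F // g ≠ 0} × Fin m1 × Fin m2) ⊕ Fin m2 → I → F → F
  | Sum.inl (g, k, _), i, v => g.1⁻¹ * (v - A i k)
  | Sum.inr _, _, v => v

theorem apply_eq_iff (p : I × Fin n2) (col : ({g : F // g ≠ 0} × Fin m1 × Fin m2) ⊕ Fin m2)
    (v : F) : FmatG A B p col = v ↔ B p.1 p.2 (baseCol col) = baseEntry A col p.1 v := by
  rcases col with ⟨g, k, l⟩ | l
  · change A p.1 k + g.1 * B p.1 p.2 l = v ↔ B p.1 p.2 l = g.1⁻¹ * (v - A p.1 k)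
    rw [eq_inv_mul_iff_mul_eq₀ g.2, eq_sub_iff_add_eq']
  · rfl

variable [Fintype I] [Fintype F] [DecidableEq F]

theorem card_filter_baseEntry_eq (hbal : ∀ k, IsBalanced fun i => A i k) (hA : IsOA A 2)
    {c c' : ({g : F // g ≠ 0} × Fin m1 × Fin m2) ⊕ Fin m2} (hne : c ≠ c')
    (hcol : baseCol c = baseCol c') (v₁ v₂ : F) :
    #{i | baseEntry A c i v₁ = baseEntry A c' i v₂} * Fintype.card F = Fintype.card I := by
  rcases c with ⟨g, k, l⟩ | l <;> rcases c' with ⟨g', k', l'⟩ | l'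
  · have hpq : k = k' → g.1⁻¹ ≠ g'.1⁻¹ := by
      rintro rfl hinv
      exact hne (by rw [Subtype.ext (inv_inj.mp hinv), show l = l' from hcol])
    convert card_filter_mul_sub_mul_eq hbal hA (inv_ne_zero g.2) hpq
      (g.1⁻¹ * v₁ - g'.1⁻¹ * v₂) using 3
    refine filter_congr fun i _ => ?_
    dsimp only [baseEntry]
    constructor <;> intro h <;> linear_combination -h
  · convert card_filter_mul_sub_mul_eq hbal hA (inv_ne_zero g.2) (q := 0)
      (fun _ => by simpa using g.2) (g.1⁻¹ * v₁ - v₂) using 3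
    refine filter_congr fun i _ => ?_
    dsimp only [baseEntry]
    constructor <;> intro h <;> linear_combination -h
  · convert card_filter_mul_sub_mul_eq hbal hA (inv_ne_zero g'.2) (q := 0)
      (fun _ => by simpa using g'.2) (g'.1⁻¹ * v₂ - v₁) using 3
    refine filter_congr fun i _ => ?_
    dsimp only [baseEntry]
    constructor <;> intro h <;> linear_combination h
  · exact absurd (congrArg Sum.inr hcol) hne

theorem isOA_two (hbal : ∀ k, IsBalanced fun i => A i k) (hA : IsOA A 2)
    (hB : ∀ i, IsOA (B i) 2) (hBbal : ∀ i l, IsBalanced fun j => B i j l) :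
    IsOA (FmatG A B) 2 := by
  refine isOA_two_iff.mpr fun c c' hne v₁ v₂ => ?_
  simp only [apply_eq_iff]
  by_cases hcol : baseCol c = baseCol c'
  · rw [← hcol, sq, ← mul_assoc,
      card_filter_stack_of_eq (fun i => hBbal i _) (baseEntry A c · v₁) (baseEntry A c' · v₂),
      mul_right_comm, card_filter_baseEntry_eq hbal hA hne hcol, Fintype.card_prod]
  · rw [card_filter_stack_of_ne hB hcol (baseEntry A c · v₁) (baseEntry A c' · v₂),
      Fintype.card_prod]

end FmatG

theorem statement16_general {F : Type} [Field F] [Fintype F] [DecidableEq F]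
    {n1 m1 n2 m2 a : ℕ}
    (A : Fin n1 → Fin m1 → F) (B : Fin n1 → Fin n2 → Fin m2 → F)
    (hA1 : m1 = 1 → IsOA A 1) (hA2 : 1 < m1 → IsOA A 2)
    (hB : ∀ i, IsROA (B i) a) :
    IsOA (FmatG A B) 2 ∧
    Fintype.card (({g : F // g ≠ 0} × Fin m1 × Fin m2) ⊕ Fin m2)
      = (Fintype.card F - 1) * m1 * m2 + m2 ∧
    (a * Fintype.card F ∣ n1 * n2) ∧
    ∀ (i : Fin n1) (k : ℕ) (col : ({g : F // g ≠ 0} × Fin m1 × Fin m2) ⊕ Fin m2) (x : F),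
      (k + 1) * (a * Fintype.card F) ≤ n2 →
      (Finset.univ.filter fun j : Fin n2 =>
        (j : ℕ) / (a * Fintype.card F) = k ∧ FmatG A B (i, j) col = x).card = a := by
  have hA : IsOA A 2 := by
    rcases lt_or_ge 1 m1 with hm | hm
    · exact hA2 hm
    · have := Fin.subsingleton_iff_le_one.mpr hm
      exact isOA_two_of_subsingleton A
  have hAbal : ∀ k, IsBalanced fun i => A i k := by
    intro k
    rcases lt_or_ge 1 m1 with hm | hm
    · have := Fin.nontrivial_iff_two_le.mpr hm
      obtain ⟨k', hk'⟩ := exists_ne k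
      exact hA.isBalanced_of_two hk'
    · exact (hA1 (le_antisymm hm k.pos)).isBalanced_of_one k
  refine ⟨FmatG.isOA_two hAbal hA (fun i => (hB i).1) (fun i => (hB i).isBalanced), ?_, ?_, ?_⟩
  · simp [Fintype.card_subtype_compl, mul_assoc]
  · rcases n1.eq_zero_or_pos with rfl | hn1
    · simp
    · exact (hB ⟨0, hn1⟩).2.1.mul_left n1
  · intro i k col x hk
    simp only [FmatG.apply_eq_iff]
    exact (hB i).2.2 k _ _ hk

/-- Proposition 5: if `A` is an `OA(n₁, m₁, s, 1)` for `m₁ = 1` (resp. an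
`OA(n₁, m₁, s, 2)` for `m₁ > 1`) and each `Bᵢ` is an `ROA(n₂, m₂, s, 2; a)`, then `𝐅` is an
`ROA(n₁n₂, (s−1)m₁m₂ + m₂, s, 2; a)`: `𝐅` is an orthogonal array of strength two, and in the
partition of its rows into consecutive blocks of `a·s` rows (under the row order
`(i, j) ↦ (i−1)·n₂ + j`, these blocks are given by an index `i` of a block of `A` together
with a block `k` of `Bᵢ`), every column of every block contains each symbol exactly `a`
times. -/
theorem statement16 {F : Type} [Field F] [Fintype F] [DecidableEq F]
    {n1 m1 n2 m2 a : ℕ} (ha : 0 < a) (hm1 : 0 < m1)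
    (A : Fin n1 → Fin m1 → F) (B : Fin n1 → Fin n2 → Fin m2 → F)
    (hA1 : m1 = 1 → IsOA A 1) (hA2 : 1 < m1 → IsOA A 2)
    (hB : ∀ i, IsROA (B i) a) :
    IsOA (FmatG A B) 2 ∧
    Fintype.card (({g : F // g ≠ 0} × Fin m1 × Fin m2) ⊕ Fin m2)
      = (Fintype.card F - 1) * m1 * m2 + m2 ∧
    (a * Fintype.card F ∣ n1 * n2) ∧
    ∀ (i : Fin n1) (k : ℕ) (col : ({g : F // g ≠ 0} × Fin m1 × Fin m2) ⊕ Fin m2) (x : F),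
      (k + 1) * (a * Fintype.card F) ≤ n2 →
      (Finset.univ.filter fun j : Fin n2 =>
        (j : ℕ) / (a * Fintype.card F) = k ∧ FmatG A B (i, j) col = x).card = a :=
  statement16_general A B hA1 hA2 hB
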